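/- arXiv:2401.06981 — 8 statements merged into one kernel-verified Lean document; each statement's English description precedes it below -/
import Mathlib

section
/- Let f : 2^E → ℝ≥0 be a monotone submodular function on a finite set E with f(∅) = 0, and let x ∈ ℝ≥0^E. Define the water level of e ∈ E as w_e = max over sets S containing e of (min over sets T with f_T({e}) ≠ 0 of x(S \ T) / f_T(S)), where f_T(S) := f(S ∪ T) − f(T). Then the max-min equals the min-max: w_e = min over sets T with f_T({e}) ≠ 0 of (max over S containing e of x(S \ T) / f_T(S)). -/
open Finset

variable {E : Type*} [Fintype E] [DecidableEq E]

/-- Water level of element `e` for allocation `x` w.r.t. submodular `f`: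
`max_{S ∋ e} min_{T : f_T({e}) ≠ 0} x(S \ T) / f_T(S)`. -/
noncomputable def waterLevel (f : Finset E → ℝ) (x : E → ℝ) (e : E) : ℝ :=
  sSup {r | ∃ S : Finset E, e ∈ S ∧
    r = sInf {q | ∃ T : Finset E, f ({e} ∪ T) - f T ≠ 0 ∧
      q = (∑ a ∈ S \ T, x a) / (f (S ∪ T) - f T)}}

/-- Sets of values indexed by finsets of a finite type are finite. -/
lemma fin_helper {E : Type*} [Fintype E] (g : Finset E → ℝ) (P : Finset E → Prop) :
    Set.Finite {r | ∃ T, P T ∧ r = g T} := by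
  apply (Set.finite_range g).subset
  rintro r ⟨T, _, rfl⟩
  exact ⟨T, rfl⟩

/-- Abstract minimax principle: weak duality plus a "universal" row `S'`. -/
lemma aux_minimax {E : Type*} [Fintype E] [DecidableEq E]
    (R : Finset E → Finset E → ℝ) (V : Finset E → Prop) (e : E)
    (hV : ∃ T, V T)
    (hstar : ∃ S', e ∈ S' ∧ ∀ T, V T →
      sInf {r | ∃ T, V T ∧ r = sSup {q | ∃ S, e ∈ S ∧ q = R S T}} ≤ R S' T) :
    sSup {r | ∃ S, e ∈ S ∧ r = sInf {q | ∃ T, V T ∧ q = R S T}} =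
      sInf {r | ∃ T, V T ∧ r = sSup {q | ∃ S, e ∈ S ∧ q = R S T}} := by
  obtain ⟨T₁, hT₁⟩ := hV
  have hOne : Set.Nonempty {r | ∃ T, V T ∧ r = sSup {q | ∃ S, e ∈ S ∧ q = R S T}} :=
    ⟨_, T₁, hT₁, rfl⟩
  apply le_antisymm
  · have hLmem : sInf {q | ∃ T, V T ∧ q = R {e} T} ∈
        {r | ∃ S, e ∈ S ∧ r = sInf {q | ∃ T, V T ∧ q = R S T}} :=
      ⟨{e}, mem_singleton_self e, rfl⟩
    apply csSup_le ⟨_, hLmem⟩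
    rintro r ⟨S, heS, rfl⟩
    obtain ⟨T₀, hT₀, hEq⟩ := hOne.csInf_mem
      (fin_helper (fun T => sSup {q | ∃ S, e ∈ S ∧ q = R S T}) V)
    rw [hEq]
    calc sInf {q | ∃ T, V T ∧ q = R S T} ≤ R S T₀ :=
          csInf_le (fin_helper (fun T => R S T) V).bddBelow ⟨T₀, hT₀, rfl⟩
      _ ≤ _ := le_csSup (fin_helper (fun S => R S T₀) (fun S => e ∈ S)).bddAbove
          ⟨S, heS, rfl⟩
  · obtain ⟨S', heS', hS'⟩ := hstar
    have h1 : sInf {r | ∃ T, V T ∧ r = sSup {q | ∃ S, e ∈ S ∧ q = R S T}} ≤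
        sInf {q | ∃ T, V T ∧ q = R S' T} :=
      le_csInf ⟨_, T₁, hT₁, rfl⟩ (by rintro q ⟨T, hT, rfl⟩; exact hS' T hT)
    refine h1.trans (le_csSup ?_ ⟨S', heS', rfl⟩)
    exact (fin_helper (fun S => sInf {q | ∃ T, V T ∧ q = R S T}) (fun S => e ∈ S)).bddAbove

theorem waterLevel_minimax (f : Finset E → ℝ) (x : E → ℝ)
    (hmono : ∀ A B : Finset E, A ⊆ B → f A ≤ f B)
    (hsub : ∀ A B : Finset E, f (A ∪ B) + f (A ∩ B) ≤ f A + f B)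
    (h0 : f ∅ = 0) (hpos : ∀ e : E, 0 < f {e}) (hx : ∀ e, 0 ≤ x e) (e : E) :
    waterLevel f x e =
      sInf {r | ∃ T : Finset E, f ({e} ∪ T) - f T ≠ 0 ∧
        r = sSup {q | ∃ S : Finset E, e ∈ S ∧
          q = (∑ a ∈ S \ T, x a) / (f (S ∪ T) - f T)}} := by
  classical
  unfold waterLevel
  set α := sInf {r | ∃ T : Finset E, f ({e} ∪ T) - f T ≠ 0 ∧
      r = sSup {q | ∃ S : Finset E, e ∈ S ∧
        q = (∑ a ∈ S \ T, x a) / (f (S ∪ T) - f T)}} with hα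
  -- basic positivity facts
  have hvpos : ∀ T : Finset E, f ({e} ∪ T) - f T ≠ 0 → 0 < f ({e} ∪ T) - f T := fun T hT =>
    lt_of_le_of_ne (sub_nonneg.mpr (hmono _ _ subset_union_right)) (Ne.symm hT)
  have hnotmem : ∀ T : Finset E, f ({e} ∪ T) - f T ≠ 0 → e ∉ T := by
    intro T hT heT
    apply hT
    rw [Finset.union_eq_right.mpr (singleton_subset_iff.mpr heT), sub_self]
  have hdpos : ∀ S T : Finset E, e ∈ S → f ({e} ∪ T) - f T ≠ 0 → 0 < f (S ∪ T) - f T := by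
    intro S T heS hT
    have h1 : f ({e} ∪ T) ≤ f (S ∪ T) :=
      hmono _ _ (union_subset_union_left (singleton_subset_iff.mpr heS))
    have := hvpos T hT
    linarith
  -- Property P: for every valid T there is S ∋ e with G T ≤ G S, where G S = x(S) - α f(S).
  have hP : ∀ T : Finset E, f ({e} ∪ T) - f T ≠ 0 →
      ∃ S : Finset E, e ∈ S ∧
        (∑ a ∈ T, x a) - α * f T ≤ (∑ a ∈ S, x a) - α * f S := by
    intro T hT
    have hαle : α ≤ sSup {q | ∃ S : Finset E, e ∈ S ∧
        q = (∑ a ∈ S \ T, x a) / (f (S ∪ T) - f T)} := by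
      rw [hα]
      exact csInf_le (fin_helper (fun T => sSup {q | ∃ S : Finset E, e ∈ S ∧
        q = (∑ a ∈ S \ T, x a) / (f (S ∪ T) - f T)})
        (fun T => f ({e} ∪ T) - f T ≠ 0)).bddBelow ⟨T, hT, rfl⟩
    have hne : Set.Nonempty {q | ∃ S : Finset E, e ∈ S ∧
        q = (∑ a ∈ S \ T, x a) / (f (S ∪ T) - f T)} :=
      ⟨_, {e}, mem_singleton_self e, rfl⟩
    obtain ⟨S, heS, hSEq⟩ := hne.csSup_mem
      (fin_helper (fun S => (∑ a ∈ S \ T, x a) / (f (S ∪ T) - f T)) (fun S => e ∈ S))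
    have hd := hdpos S T heS hT
    have hkey : α * (f (S ∪ T) - f T) ≤ ∑ a ∈ S \ T, x a := by
      have h2 : α ≤ (∑ a ∈ S \ T, x a) / (f (S ∪ T) - f T) := hSEq ▸ hαle
      rw [le_div_iff₀ hd] at h2
      exact h2
    refine ⟨S ∪ T, mem_union_left _ heS, ?_⟩
    have hsum : (∑ a ∈ (S ∪ T) \ T, x a) + ∑ a ∈ T, x a = ∑ a ∈ S ∪ T, x a :=
      Finset.sum_sdiff subset_union_right
    have hsd : (S ∪ T) \ T = S \ T := union_sdiff_right S T
    rw [hsd] at hsum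
    linarith
  -- the maximizer S* of G over sets containing e
  obtain ⟨Sstar, hmemS, hmaxS⟩ := Finset.exists_max_image
    (Finset.univ.filter fun S : Finset E => e ∈ S)
    (fun S => (∑ a ∈ S, x a) - α * f S)
    ⟨{e}, by simp⟩
  have heS : e ∈ Sstar := (Finset.mem_filter.mp hmemS).2
  have hmax : ∀ S : Finset E, e ∈ S →
      (∑ a ∈ S, x a) - α * f S ≤ (∑ a ∈ Sstar, x a) - α * f Sstar := fun S hS =>
    hmaxS S (Finset.mem_filter.mpr ⟨Finset.mem_univ _, hS⟩)
  -- S* is universally good: for every valid T, the ratio is at least α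
  have hstar : ∀ T : Finset E, f ({e} ∪ T) - f T ≠ 0 →
      α ≤ (∑ a ∈ Sstar \ T, x a) / (f (Sstar ∪ T) - f T) := by
    intro T hT
    have heT : e ∉ T := hnotmem T hT
    -- T' = T ∩ Sstar is valid
    have idA : ({e} ∪ (T ∩ Sstar)) ∪ T = {e} ∪ T := by
      ext a
      simp only [mem_union, mem_inter, mem_singleton]
      tauto
    have idB : ({e} ∪ (T ∩ Sstar)) ∩ T = T ∩ Sstar := by
      ext a
      simp only [mem_union, mem_inter, mem_singleton]
      constructor
      · rintro ⟨(rfl | ⟨h1, h2⟩), h3⟩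
        · exact absurd h3 heT
        · exact ⟨h1, h2⟩
      · rintro ⟨h1, h2⟩
        exact ⟨Or.inr ⟨h1, h2⟩, h1⟩
    have hT' : f ({e} ∪ (T ∩ Sstar)) - f (T ∩ Sstar) ≠ 0 := by
      have hs := hsub ({e} ∪ (T ∩ Sstar)) T
      rw [idA, idB] at hs
      have := hvpos T hT
      have : 0 < f ({e} ∪ (T ∩ Sstar)) - f (T ∩ Sstar) := by linarith
      exact ne_of_gt this
    obtain ⟨S'', heS'', hG1⟩ := hP (T ∩ Sstar) hT'
    have hG2 := (hG1.trans (hmax S'' heS''))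
    -- sums over T' ⊆ Sstar
    have hsub' : T ∩ Sstar ⊆ Sstar := inter_subset_right
    have hsum2 : (∑ a ∈ Sstar \ (T ∩ Sstar), x a) + ∑ a ∈ T ∩ Sstar, x a
        = ∑ a ∈ Sstar, x a := Finset.sum_sdiff hsub'
    have hd' : 0 < f Sstar - f (T ∩ Sstar) := by
      have h1 : f ({e} ∪ (T ∩ Sstar)) ≤ f Sstar :=
        hmono _ _ (union_subset (singleton_subset_iff.mpr heS) hsub')
      have h2 := hvpos _ hT'
      linarith
    have hsd : Sstar \ (T ∩ Sstar) = Sstar \ T := by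
      ext a; simp only [mem_sdiff, mem_inter]; tauto
    have hnum : α * (f Sstar - f (T ∩ Sstar)) ≤ ∑ a ∈ Sstar \ T, x a := by
      rw [← hsd]
      linarith
    have hd : 0 < f (Sstar ∪ T) - f T := hdpos Sstar T heS hT
    have hdd : f (Sstar ∪ T) - f T ≤ f Sstar - f (T ∩ Sstar) := by
      have hs := hsub Sstar T
      rw [Finset.inter_comm] at hs
      linarith
    have hnn : 0 ≤ ∑ a ∈ Sstar \ T, x a := Finset.sum_nonneg fun a _ => hx a
    calc α ≤ (∑ a ∈ Sstar \ T, x a) / (f Sstar - f (T ∩ Sstar)) := by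
          rw [le_div_iff₀ hd']; exact hnum
      _ ≤ (∑ a ∈ Sstar \ T, x a) / (f (Sstar ∪ T) - f T) :=
          div_le_div_of_nonneg_left hnn hd hdd
  -- conclude via the abstract minimax lemma
  have hVne : f ({e} ∪ (∅ : Finset E)) - f ∅ ≠ 0 := by
    rw [union_empty, h0, sub_zero]
    exact ne_of_gt (hpos e)
  rw [hα]
  exact aux_minimax
    (fun S T => (∑ a ∈ S \ T, x a) / (f (S ∪ T) - f T))
    (fun T => f ({e} ∪ T) - f T ≠ 0) e ⟨∅, hVne⟩
    ⟨Sstar, heS, fun T hT => by rw [← hα]; exact hstar T hT⟩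
end

section
/- Let f be a monotone submodular function with f(∅)=0 on finite set E and x ∈ ℝ≥0^E. Define density t₁ := max_{S ⊆ E, S ≠ ∅} x(S)/f(S) (over sets with f(S) > 0). Then for any T ⊆ S₁ where S₁ is a set achieving density t₁, either x(S₁ \ T)/f_T(S₁) ≥ t₁ or T itself has density strictly greater than t₁. In particular, since S₁ has maximum density, min_{T ⊊ S₁} x(S₁ \ T)/f_T(S₁) = t₁ is attained at T = ∅. -/
open Finset

variable {E : Type*} [Fintype E] [DecidableEq E]

theorem densest_set_contraction (f : Finset E → ℝ) (x : E → ℝ) (t₁ : ℝ)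
    (hmono : ∀ A B : Finset E, A ⊆ B → f A ≤ f B)
    (hsub : ∀ A B : Finset E, f (A ∪ B) + f (A ∩ B) ≤ f A + f B)
    (h0 : f ∅ = 0) (hfpos : ∀ S : Finset E, S.Nonempty → 0 < f S)
    (hx : ∀ e, 0 ≤ x e)
    (S₁ : Finset E) (hS₁ : S₁.Nonempty)
    (hdens : (∑ e ∈ S₁, x e) / f S₁ = t₁)
    (hmax : ∀ S : Finset E, S.Nonempty → (∑ e ∈ S, x e) / f S ≤ t₁) :
    -- either the contracted ratio is at least t₁, or T itself is strictly denser;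
    -- in particular (by maximality) the contracted ratio is always at least t₁,
    -- so the minimum over T ⊆ S₁ equals t₁ and is attained at T = ∅
    (∀ T : Finset E, T ⊆ S₁ → f (S₁ ∪ T) - f T ≠ 0 →
      (t₁ ≤ (∑ e ∈ S₁ \ T, x e) / (f (S₁ ∪ T) - f T) ∨
        (T.Nonempty ∧ t₁ < (∑ e ∈ T, x e) / f T))) ∧
    (∀ T : Finset E, T ⊆ S₁ → f (S₁ ∪ T) - f T ≠ 0 →
      t₁ ≤ (∑ e ∈ S₁ \ T, x e) / (f (S₁ ∪ T) - f T)) ∧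
    (∑ e ∈ S₁ \ (∅ : Finset E), x e) / (f (S₁ ∪ ∅) - f ∅) = t₁ := by
  have hfS₁ : 0 < f S₁ := hfpos S₁ hS₁
  have key : ∀ T : Finset E, T ⊆ S₁ → f (S₁ ∪ T) - f T ≠ 0 →
      t₁ ≤ (∑ e ∈ S₁ \ T, x e) / (f (S₁ ∪ T) - f T) := by
    intro T hTS hne
    have hun : S₁ ∪ T = S₁ := Finset.union_eq_left.mpr hTS
    rw [hun] at hne ⊢
    have hle : f T ≤ f S₁ := hmono T S₁ hTS
    have hpos : 0 < f S₁ - f T := lt_of_le_of_ne (by linarith) (Ne.symm hne)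
    have hxT : (∑ e ∈ T, x e) ≤ t₁ * f T := by
      rcases T.eq_empty_or_nonempty with rfl | hT
      · simp [h0]
      · have := hmax T hT
        have hfT := hfpos T hT
        rw [div_le_iff₀ hfT] at this
        linarith
    have hsum : (∑ e ∈ S₁, x e) = (∑ e ∈ S₁ \ T, x e) + (∑ e ∈ T, x e) :=
      (Finset.sum_sdiff hTS).symm
    have hxS₁ : (∑ e ∈ S₁, x e) = t₁ * f S₁ := by
      field_simp at hdens; linarith [hdens]
    rw [le_div_iff₀ hpos]
    nlinarith
  refine ⟨fun T hT hne => Or.inl (key T hT hne), key, ?_⟩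
  simp [h0, hdens]
end

section
/- Let f be a monotone submodular function with f(∅) = 0 on finite set E. If S and S' are both maximizers of the density x(S)/f(S) over nonempty subsets of E (with f > 0 on nonempty sets), then S ∪ S' is also a maximizer. Hence there is a unique maximal densest set. -/
open Finset

variable {E : Type*} [Fintype E] [DecidableEq E]

theorem densest_union_densest (f : Finset E → ℝ) (x : E → ℝ) (t : ℝ)
    (hmono : ∀ A B : Finset E, A ⊆ B → f A ≤ f B)
    (hsub : ∀ A B : Finset E, f (A ∪ B) + f (A ∩ B) ≤ f A + f B)
    (h0 : f ∅ = 0) (hfpos : ∀ S : Finset E, S.Nonempty → 0 < f S)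
    (hx : ∀ e, 0 ≤ x e)
    (hmax : ∀ A : Finset E, A.Nonempty → (∑ e ∈ A, x e) / f A ≤ t)
    (S S' : Finset E) (hS : S.Nonempty) (hS' : S'.Nonempty)
    (hSd : (∑ e ∈ S, x e) / f S = t) (hS'd : (∑ e ∈ S', x e) / f S' = t) :
    (∑ e ∈ S ∪ S', x e) / f (S ∪ S') = t := by
  have hfS := hfpos S hS
  have hfS' := hfpos S' hS'
  have hU : (S ∪ S').Nonempty := hS.mono subset_union_left
  have hfU := hfpos _ hU
  have ht : 0 ≤ t := by
    rw [← hSd]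
    exact div_nonneg (Finset.sum_nonneg fun e _ => hx e) hfS.le
  have hxS : ∑ e ∈ S, x e = t * f S := by
    field_simp at hSd; linarith
  have hxS' : ∑ e ∈ S', x e = t * f S' := by
    field_simp at hS'd; linarith
  have hxI : ∑ e ∈ S ∩ S', x e ≤ t * f (S ∩ S') := by
    rcases (S ∩ S').eq_empty_or_nonempty with h | h
    · simp [h, h0]
    · have := hmax _ h
      have hfI := hfpos _ h
      rw [div_le_iff₀ hfI] at this
      linarith [this]
  have hsum : ∑ e ∈ S ∪ S', x e + ∑ e ∈ S ∩ S', x e = ∑ e ∈ S, x e + ∑ e ∈ S', x e :=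
    Finset.sum_union_inter
  have hle : (∑ e ∈ S ∪ S', x e) / f (S ∪ S') ≤ t := hmax _ hU
  have hge : t * f (S ∪ S') ≤ ∑ e ∈ S ∪ S', x e := by
    have := hsub S S'
    nlinarith
  rw [div_le_iff₀ hfU] at hle
  rw [div_eq_iff hfU.ne']
  linarith
end

section
/- Let f be a monotone submodular function with f(∅) = 0 on finite set E, x ∈ ℝ≥0^E, and let w^x be the water level vector (w^x_e = max_{S∋e} min_{T: f_T({e})≠0} x(S\T)/f_T(S)). Then w^x_e ≤ 1 for all e ∈ E if and only if x(S) ≤ f(S) for all S ⊆ E. -/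
open Finset

variable {E : Type*} [Fintype E] [DecidableEq E]

theorem waterLevel_indicates_feasibility (f : Finset E → ℝ) (x : E → ℝ)
    (hmono : ∀ A B : Finset E, A ⊆ B → f A ≤ f B)
    (hsub : ∀ A B : Finset E, f (A ∪ B) + f (A ∩ B) ≤ f A + f B)
    (h0 : f ∅ = 0) (hpos : ∀ e : E, 0 < f {e}) (hx : ∀ e, 0 ≤ x e) :
    (∀ e : E, waterLevel f x e ≤ 1) ↔ (∀ S : Finset E, ∑ e ∈ S, x e ≤ f S) := by
  -- denominator positivity
  have hdpos : ∀ (e : E) (S T : Finset E), e ∈ S → f ({e} ∪ T) - f T ≠ 0 →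
      0 < f (S ∪ T) - f T := by
    intro e S T heS hne
    have h1 : f T ≤ f ({e} ∪ T) := hmono _ _ subset_union_right
    have h2 : f ({e} ∪ T) ≤ f (S ∪ T) :=
      hmono _ _ (union_subset_union_left (singleton_subset_iff.mpr heS))
    have h3 : 0 < f ({e} ∪ T) - f T := lt_of_le_of_ne (by linarith) (Ne.symm hne)
    linarith
  have hBfin : ∀ (e : E) (S : Finset E), {q | ∃ T : Finset E, f ({e} ∪ T) - f T ≠ 0 ∧
      q = (∑ a ∈ S \ T, x a) / (f (S ∪ T) - f T)}.Finite := by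
    intro e S
    apply Set.Finite.subset
      (Set.finite_range fun T : Finset E => (∑ a ∈ S \ T, x a) / (f (S ∪ T) - f T))
    rintro q ⟨T, -, rfl⟩; exact ⟨T, rfl⟩
  have hBne : ∀ (e : E) (S : Finset E), ({q | ∃ T : Finset E, f ({e} ∪ T) - f T ≠ 0 ∧
      q = (∑ a ∈ S \ T, x a) / (f (S ∪ T) - f T)} : Set ℝ).Nonempty := by
    intro e S
    refine ⟨(∑ a ∈ S \ ∅, x a) / (f (S ∪ ∅) - f ∅), ∅, ?_, rfl⟩
    simp only [union_empty, h0, sub_zero]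
    exact ne_of_gt (hpos e)
  have hBnn : ∀ (e : E) (S : Finset E), e ∈ S → ∀ q ∈ {q | ∃ T : Finset E,
      f ({e} ∪ T) - f T ≠ 0 ∧ q = (∑ a ∈ S \ T, x a) / (f (S ∪ T) - f T)}, (0:ℝ) ≤ q := by
    rintro e S heS q ⟨T, hne, rfl⟩
    exact div_nonneg (Finset.sum_nonneg fun a _ => hx a) (le_of_lt (hdpos e S T heS hne))
  constructor
  · -- waterLevel ≤ 1 → feasible
    intro h S
    induction S using Finset.strongInductionOn with
    | _ S ih =>
      rcases S.eq_empty_or_nonempty with rfl | ⟨e, heS⟩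
      · simp [h0]
      · have hle := h e
        unfold waterLevel at hle
        have hrmem : sInf {q | ∃ T : Finset E, f ({e} ∪ T) - f T ≠ 0 ∧
            q = (∑ a ∈ S \ T, x a) / (f (S ∪ T) - f T)} ∈
            {r | ∃ S' : Finset E, e ∈ S' ∧ r = sInf {q | ∃ T : Finset E,
              f ({e} ∪ T) - f T ≠ 0 ∧ q = (∑ a ∈ S' \ T, x a) / (f (S' ∪ T) - f T)}} :=
          ⟨S, heS, rfl⟩
        have hAfin : ({r | ∃ S' : Finset E, e ∈ S' ∧ r = sInf {q | ∃ T : Finset E,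
            f ({e} ∪ T) - f T ≠ 0 ∧ q = (∑ a ∈ S' \ T, x a) / (f (S' ∪ T) - f T)}} :
            Set ℝ).Finite := by
          apply Set.Finite.subset (Set.finite_range fun S' : Finset E =>
            sInf {q | ∃ T : Finset E, f ({e} ∪ T) - f T ≠ 0 ∧
              q = (∑ a ∈ S' \ T, x a) / (f (S' ∪ T) - f T)})
          rintro r ⟨S', -, rfl⟩; exact ⟨S', rfl⟩
        have hr1 : sInf {q | ∃ T : Finset E, f ({e} ∪ T) - f T ≠ 0 ∧
            q = (∑ a ∈ S \ T, x a) / (f (S ∪ T) - f T)} ≤ 1 :=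
          le_trans (le_csSup hAfin.bddAbove hrmem) hle
        have hmem := (hBne e S).csInf_mem (hBfin e S)
        obtain ⟨T, hTne, hTeq⟩ := hmem
        rw [hTeq] at hr1
        have hd := hdpos e S T heS hTne
        have hnum : ∑ a ∈ S \ T, x a ≤ f (S ∪ T) - f T := by
          rw [div_le_one hd] at hr1; exact hr1
        have heT : e ∉ T := by
          intro heT
          apply hTne
          rw [Finset.union_eq_right.mpr (singleton_subset_iff.mpr heT)]
          ring
        have hssub : S ∩ T ⊂ S := by
          refine (Finset.ssubset_iff_of_subset inter_subset_left).mpr ⟨e, heS, ?_⟩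
          simp [heT]
        have hIH := ih _ hssub
        have hsplit : ∑ a ∈ S ∩ T, x a + ∑ a ∈ S \ T, x a = ∑ a ∈ S, x a :=
          Finset.sum_inter_add_sum_sdiff S T x
        have hsm := hsub S T
        linarith
  · -- feasible → waterLevel ≤ 1
    intro h e
    unfold waterLevel
    apply Real.sSup_le _ zero_le_one
    rintro r ⟨S, heS, rfl⟩
    have hq : (∑ a ∈ S \ ∅, x a) / (f (S ∪ ∅) - f ∅) ∈ {q | ∃ T : Finset E,
        f ({e} ∪ T) - f T ≠ 0 ∧ q = (∑ a ∈ S \ T, x a) / (f (S ∪ T) - f T)} := by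
      refine ⟨∅, ?_, rfl⟩
      simp only [union_empty, h0, sub_zero]
      exact ne_of_gt (hpos e)
    refine le_trans (csInf_le ⟨0, hBnn e S heS⟩ hq) ?_
    have hfS : 0 < f S := lt_of_lt_of_le (hpos e) (hmono _ _ (singleton_subset_iff.mpr heS))
    rw [sdiff_empty, union_empty, h0, sub_zero, div_le_one hfS]
    exact h S
end

section
/- Let f be a monotone submodular function with f(∅)=0 on finite set E, x ∈ ℝ≥0^E, and w^x the water level vector. Then the Lovász extension of f evaluated at w^x equals the total mass of x: L_f(w^x) = ∑_{e ∈ E} x_e, where L_f(w) := ∫_0^∞ f({e : w_e ≥ t}) dt. -/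
open Finset MeasureTheory

variable {E : Type*} [Fintype E] [DecidableEq E]

open Classical in
/-- Lovász extension: `L_f(w) = ∫_0^∞ f({e : w_e ≥ t}) dt`. -/
noncomputable def lovasz (f : Finset E → ℝ) (w : E → ℝ) : ℝ :=
  ∫ t in Set.Ioi (0 : ℝ), f (Finset.univ.filter (fun e => t ≤ w e))

/-!
Peel off the density decomposition of `x` from the top. Over a set `C` already peeled at level
`t`, let `t'` be the largest density `x(B) / (f(B ∪ C) - f(C))` of a nonempty `B` outside `C`, and
`A` the largest set attaining it: sets attaining the maximal density are closed under union by
submodularity. Taking `T = C` in the definition of the water level caps it by `t'` on `A`, and the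
density of `A ∪ C` at level `t'` gives the matching lower bound. So the layer `A` lies exactly at
height `t'`, where it adds `t' (f(A ∪ C) - f(C)) = x(A)` to the Lovász integral, and induction on
the number of elements left sums the layers to `x(E)`.
-/

section SetFunction

variable {α : Type*} [DecidableEq α] {f : Finset α → ℝ} {x : α → ℝ} {A C : Finset α}
  {t : ℝ}

def Submodular (f : Finset α → ℝ) : Prop :=
  ∀ A B : Finset α, f (A ∪ B) + f (A ∩ B) ≤ f A + f B

theorem Submodular.comp_union_right (hf : Submodular f) (C : Finset α) :
    Submodular fun S => f (S ∪ C) := by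
  intro A B
  have hU : (A ∪ C) ∪ (B ∪ C) = (A ∪ B) ∪ C := by ext; simp only [mem_union]; tauto
  simpa only [hU, ← inter_union_distrib_right] using hf (A ∪ C) (B ∪ C)

theorem sub_pos_of_mem_of_ne (hmono : Monotone f) {e : α} {S T : Finset α}
    (hT : f ({e} ∪ T) - f T ≠ 0) (heS : e ∈ S) : 0 < f (S ∪ T) - f T := by
  have h1 : f T ≤ f ({e} ∪ T) := hmono subset_union_right
  have h2 : f ({e} ∪ T) ≤ f (S ∪ T) := hmono (union_subset_union_left (by simpa using heS))
  have h3 : f T ≠ f ({e} ∪ T) := fun h => hT (by rw [h, sub_self])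
  linarith [lt_of_le_of_ne h1 h3]

/-- The inner minimum of `waterLevel` for `S` is at least `t`, multiplied out so that a vanishing
denominator needs no separate case. -/
def IsDense (f : Finset α → ℝ) (x : α → ℝ) (S : Finset α) (t : ℝ) : Prop :=
  ∀ T, t * (f (S ∪ T) - f T) ≤ ∑ a ∈ S \ T, x a

def IsSparseOver (f : Finset α → ℝ) (x : α → ℝ) (C : Finset α) (t : ℝ) : Prop :=
  ∀ B, Disjoint B C → B.Nonempty → ∑ a ∈ B, x a < t * (f (B ∪ C) - f C)

theorem IsDense.mono (hmono : Monotone f) {S : Finset α} {s : ℝ} (h : IsDense f x S t)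
    (hst : s ≤ t) : IsDense f x S s :=
  fun T => (mul_le_mul_of_nonneg_right hst (sub_nonneg.2 (hmono subset_union_right))).trans (h T)

theorem IsSparseOver.sub_pos (hmono : Monotone f) (hx : ∀ e, 0 ≤ x e)
    (h : IsSparseOver f x C t) (B : Finset α) (hBC : Disjoint B C) (hB : B.Nonempty) :
    0 < f (B ∪ C) - f C := by
  have hprod : 0 < t * (f (B ∪ C) - f C) :=
    (sum_nonneg fun a _ => hx a).trans_lt (h B hBC hB)
  refine lt_of_le_of_ne (sub_nonneg.2 (hmono subset_union_right)) fun hzero => ?_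
  rw [← hzero, mul_zero] at hprod
  exact hprod.false

theorem tight_union (hsub : Submodular f) (ht : 0 ≤ t)
    (hub : ∀ B, Disjoint B C → ∑ a ∈ B, x a ≤ t * (f (B ∪ C) - f C))
    {B : Finset α} (hAC : Disjoint A C) (hBC : Disjoint B C)
    (hA : ∑ a ∈ A, x a = t * (f (A ∪ C) - f C))
    (hB : ∑ a ∈ B, x a = t * (f (B ∪ C) - f C)) :
    ∑ a ∈ A ∪ B, x a = t * (f ((A ∪ B) ∪ C) - f C) := by
  have hsum := sum_union_inter (s₁ := A) (s₂ := B) (f := x)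
  have hsubmod := mul_le_mul_of_nonneg_left (hsub.comp_union_right C A B) ht
  have hinter := hub (A ∩ B) (hAC.mono_left inter_subset_left)
  refine le_antisymm (hub (A ∪ B) (disjoint_union_left.2 ⟨hAC, hBC⟩)) ?_
  linarith

theorem isSparseOver_union_of_maximal
    (hub : ∀ B, Disjoint B C → ∑ a ∈ B, x a ≤ t * (f (B ∪ C) - f C))
    (hAC : Disjoint A C) (hA : ∑ a ∈ A, x a = t * (f (A ∪ C) - f C))
    (hmax : ∀ B, Disjoint B C → ∑ a ∈ B, x a = t * (f (B ∪ C) - f C) → B ⊆ A) :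
    IsSparseOver f x (A ∪ C) t := by
  intro B hB hBne
  by_contra! hle
  have hBA : Disjoint B A := hB.mono_right subset_union_left
  have hABC : Disjoint (A ∪ B) C :=
    disjoint_union_left.2 ⟨hAC, hB.mono_right subset_union_right⟩
  have hU : B ∪ (A ∪ C) = (A ∪ B) ∪ C := by ext; simp only [mem_union]; tauto
  have htight : ∑ a ∈ A ∪ B, x a = t * (f ((A ∪ B) ∪ C) - f C) := by
    refine le_antisymm (hub _ hABC) ?_
    rw [sum_union hBA.symm, ← hU]
    linarith
  obtain ⟨b, hb⟩ := hBne
  exact disjoint_left.1 hBA hb (hmax _ hABC htight (mem_union_right A hb))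

theorem isDense_union_of_tight (hsub : Submodular f) (ht : 0 ≤ t) (hdense : IsDense f x C t)
    (hub : ∀ B, Disjoint B C → ∑ a ∈ B, x a ≤ t * (f (B ∪ C) - f C))
    (hAC : Disjoint A C) (hA : ∑ a ∈ A, x a = t * (f (A ∪ C) - f C)) :
    IsDense f x (A ∪ C) t := by
  intro T
  have hsplit : ∑ a ∈ (A ∪ C) \ T, x a =
      ∑ a ∈ A, x a - ∑ a ∈ A ∩ T, x a + ∑ a ∈ C \ T, x a := by
    rw [union_sdiff_distrib, sum_union (hAC.mono sdiff_subset sdiff_subset),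
      ← sum_inter_add_sum_sdiff A T]
    ring
  have hinter := hub (A ∩ T) (hAC.mono_left inter_subset_left)
  have hsubmod := mul_le_mul_of_nonneg_left (hsub.comp_union_right C A T) ht
  have hU : (A ∪ T) ∪ C = (A ∪ C) ∪ T := by ext; simp only [mem_union]; tauto
  simp only [hU, union_comm T C] at hsubmod
  rw [hsplit]
  linarith [hdense T]

end SetFunction

theorem finite_setOf_exists_and_eq {β γ : Type*} [Finite β] (p : β → Prop) (g : β → γ) :
    {y | ∃ b, p b ∧ y = g b}.Finite :=
  (Set.finite_range g).subset (by rintro _ ⟨b, -, rfl⟩; exact ⟨b, rfl⟩)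

theorem integrableOn_Ioi_indicator_Iic (s c : ℝ) :
    IntegrableOn ((Set.Iic s).indicator fun _ => c) (Set.Ioi 0) := by
  rw [integrableOn_indicator_iff measurableSet_Iic, Set.Iic_inter_Ioi]
  exact integrableOn_const measure_Ioc_lt_top.ne

theorem setIntegral_Ioi_indicator_Iic {s : ℝ} (hs : 0 ≤ s) (c : ℝ) :
    ∫ t in Set.Ioi 0, (Set.Iic s).indicator (fun _ => c) t = s * c := by
  rw [setIntegral_indicator measurableSet_Iic, Set.Ioi_inter_Iic, setIntegral_const,
    Real.volume_real_Ioc_of_le hs, sub_zero, smul_eq_mul]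

theorem union_superlevel_sub_eq_add_indicator (f : Finset E → ℝ) {w : E → ℝ}
    {A C : Finset E} {t : ℝ} (hA : ∀ e ∈ A, t ≤ w e) (hC : ∀ e ∉ C, w e ≤ t) (s : ℝ) :
    f (({e | s ≤ w e} : Finset E) ∪ C) - f C =
      (f (({e | s ≤ w e} : Finset E) ∪ (A ∪ C)) - f (A ∪ C)) +
        (Set.Iic t).indicator (fun _ => f (A ∪ C) - f C) s := by
  by_cases hs : s ≤ t
  · have hAU : A ⊆ ({e | s ≤ w e} : Finset E) := fun e he => by simpa using hs.trans (hA e he)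
    rw [Set.indicator_of_mem (Set.mem_Iic.2 hs), ← union_assoc, union_eq_left.2 hAU]
    ring
  · have hUC : ({e | s ≤ w e} : Finset E) ⊆ C := fun e he => by
      by_contra heC
      exact hs ((mem_filter.1 he).2.trans (hC e heC))
    rw [Set.indicator_of_notMem (mt Set.mem_Iic.1 hs), union_eq_right.2 hUC,
      union_eq_right.2 (hUC.trans subset_union_right)]
    ring

section Peeling

variable {f : Finset E → ℝ} {x : E → ℝ} {C : Finset E} {t : ℝ}

theorem waterLevel_le (hmono : Monotone f) {e : E} {T : Finset E}
    (hT : f ({e} ∪ T) - f T ≠ 0)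
    (h : ∀ S, e ∈ S → ∑ a ∈ S \ T, x a ≤ t * (f (S ∪ T) - f T)) :
    waterLevel f x e ≤ t := by
  refine csSup_le ⟨_, {e}, mem_singleton_self e, rfl⟩ ?_
  rintro _ ⟨S, heS, rfl⟩
  exact (csInf_le (finite_setOf_exists_and_eq _ _).bddBelow ⟨T, hT, rfl⟩).trans
    ((div_le_iff₀ (sub_pos_of_mem_of_ne hmono hT heS)).2 (h S heS))

theorem le_waterLevel (hmono : Monotone f) {e : E} {S T₀ : Finset E} (heS : e ∈ S)
    (hT₀ : f ({e} ∪ T₀) - f T₀ ≠ 0) (hS : IsDense f x S t) : t ≤ waterLevel f x e := by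
  refine le_trans ?_ (le_csSup (finite_setOf_exists_and_eq _ _).bddAbove ⟨S, heS, rfl⟩)
  refine le_csInf ⟨_, T₀, hT₀, rfl⟩ ?_
  rintro _ ⟨T, hT, rfl⟩
  exact (le_div_iff₀ (sub_pos_of_mem_of_ne hmono hT heS)).2 (hS T)

theorem exists_isSparseOver (hpos : ∀ B, Disjoint B C → B.Nonempty → 0 < f (B ∪ C) - f C) :
    ∃ t, IsSparseOver f x C t := by
  obtain ⟨M, hM⟩ :=
    Finite.exists_le fun B : Finset E => (∑ a ∈ B, x a) / (f (B ∪ C) - f C)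
  refine ⟨M + 1, fun B hBC hB => ?_⟩
  rw [← div_lt_iff₀ (hpos B hBC hB)]
  exact (hM B).trans_lt (lt_add_one M)

theorem exists_max_density (hpos : ∀ B, Disjoint B C → B.Nonempty → 0 < f (B ∪ C) - f C)
    (hC : Cᶜ.Nonempty) :
    ∃ t, (∀ B, Disjoint B C → ∑ a ∈ B, x a ≤ t * (f (B ∪ C) - f C)) ∧
      ∃ B, Disjoint B C ∧ B.Nonempty ∧ ∑ a ∈ B, x a = t * (f (B ∪ C) - f C) := by
  have hne : (univ.filter fun B : Finset E => Disjoint B C ∧ B.Nonempty).Nonempty := by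
    obtain ⟨e, he⟩ := hC
    exact ⟨{e}, by simpa using he⟩
  obtain ⟨B₀, hB₀, hmax⟩ :=
    exists_max_image _ (fun B : Finset E => (∑ a ∈ B, x a) / (f (B ∪ C) - f C)) hne
  simp only [mem_filter, mem_univ, true_and] at hB₀ hmax
  refine ⟨_, fun B hBC => ?_, B₀, hB₀.1, hB₀.2,
    (div_mul_cancel₀ _ (hpos B₀ hB₀.1 hB₀.2).ne').symm⟩
  rcases B.eq_empty_or_nonempty with rfl | hB
  · simp
  · exact (div_le_iff₀ (hpos B hBC hB)).1 (hmax B ⟨hBC, hB⟩)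

theorem exists_maximal_tight (hsub : Submodular f) (ht : 0 ≤ t)
    (hub : ∀ B, Disjoint B C → ∑ a ∈ B, x a ≤ t * (f (B ∪ C) - f C)) :
    ∃ A, Disjoint A C ∧ ∑ a ∈ A, x a = t * (f (A ∪ C) - f C) ∧
      ∀ B, Disjoint B C → ∑ a ∈ B, x a = t * (f (B ∪ C) - f C) → B ⊆ A := by
  have hempty : ∅ ∈ univ.filter fun B : Finset E =>
      Disjoint B C ∧ ∑ a ∈ B, x a = t * (f (B ∪ C) - f C) := by simp
  obtain ⟨A, hA, hmax⟩ := exists_max_image _ card ⟨∅, hempty⟩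
  simp only [mem_filter, mem_univ, true_and] at hA hmax
  refine ⟨A, hA.1, hA.2, fun B hBC hB => ?_⟩
  have hAB := hmax (A ∪ B)
    ⟨disjoint_union_left.2 ⟨hA.1, hBC⟩, tight_union hsub ht hub hA.1 hBC hA.2 hB⟩
  exact union_eq_left.1 (eq_of_subset_of_card_le subset_union_left hAB).symm

theorem exists_next_layer (hmono : Monotone f) (hsub : Submodular f) (hx : ∀ e, 0 ≤ x e)
    (hsparse : IsSparseOver f x C t) (hdense : IsDense f x C t) (hC : Cᶜ.Nonempty) :
    ∃ A t', A.Nonempty ∧ Disjoint A C ∧ 0 ≤ t' ∧ t' < t ∧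
      ∑ a ∈ A, x a = t' * (f (A ∪ C) - f C) ∧ (∀ e ∈ A, waterLevel f x e = t') ∧
      IsSparseOver f x (A ∪ C) t' ∧ IsDense f x (A ∪ C) t' := by
  have hpos := hsparse.sub_pos hmono hx
  obtain ⟨t', hub, B₀, hB₀C, hB₀, hB₀x⟩ := exists_max_density hpos hC
  have ht' : 0 ≤ t' :=
    (mul_nonneg_iff_of_pos_right (hpos B₀ hB₀C hB₀)).1 (hB₀x ▸ sum_nonneg fun a _ => hx a)
  have htt' : t' < t :=
    lt_of_mul_lt_mul_right (hB₀x ▸ hsparse B₀ hB₀C hB₀) (hpos B₀ hB₀C hB₀).le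
  obtain ⟨A, hAC, hA, hmax⟩ := exists_maximal_tight hsub ht' hub
  have hdense' := isDense_union_of_tight hsub ht' (hdense.mono hmono htt'.le) hub hAC hA
  refine ⟨A, t', hB₀.mono (hmax B₀ hB₀C hB₀x), hAC, ht', htt', hA, fun e he => ?_,
    isSparseOver_union_of_maximal hub hAC hA hmax, hdense'⟩
  have hloop : f ({e} ∪ C) - f C ≠ 0 :=
    (hpos {e} (disjoint_singleton_left.2 (disjoint_left.1 hAC he)) (singleton_nonempty e)).ne'
  refine le_antisymm (waterLevel_le hmono hloop fun S _ => ?_)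
    (le_waterLevel hmono (mem_union_left C he) hloop hdense')
  simpa only [sdiff_union_self_eq_union] using hub (S \ C) sdiff_disjoint

theorem lovasz_contract_waterLevel (hmono : Monotone f) (hsub : Submodular f)
    (hx : ∀ e, 0 ≤ x e) (C : Finset E) (t : ℝ)
    (hsparse : IsSparseOver f x C t) (hdense : IsDense f x C t) :
    (∀ e ∉ C, waterLevel f x e < t) ∧
      IntegrableOn (fun s => f (({e | s ≤ waterLevel f x e} : Finset E) ∪ C) - f C)
        (Set.Ioi 0) ∧
      lovasz (fun S => f (S ∪ C) - f C) (waterLevel f x) = ∑ e ∈ Cᶜ, x e := by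
  rcases Cᶜ.eq_empty_or_nonempty with hC | hC
  · obtain rfl := (compl_eq_empty_iff C).1 hC
    have hU : ∀ U : Finset E, U ∪ univ = univ := fun U => union_eq_right.2 (subset_univ U)
    simp [lovasz, hU]
  obtain ⟨A, t', hA, hAC, ht', htt', hAx, hwA, hsparse', hdense'⟩ :=
    exists_next_layer hmono hsub hx hsparse hdense hC
  obtain ⟨hlt, hint, hval⟩ :=
    lovasz_contract_waterLevel hmono hsub hx (A ∪ C) t' hsparse' hdense'
  have hle : ∀ e ∉ C, waterLevel f x e ≤ t' := fun e he =>
    if heA : e ∈ A then (hwA e heA).le else (hlt e (by simp [heA, he])).le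
  have hlevel := funext (union_superlevel_sub_eq_add_indicator f (fun e he => (hwA e he).ge) hle)
  refine ⟨fun e he => (hle e he).trans_lt htt', ?_, ?_⟩
  · rw [hlevel]
    exact hint.add (integrableOn_Ioi_indicator_Iic _ _)
  · have hcompl : (A ∪ C)ᶜ = Cᶜ \ A := by rw [compl_union, sdiff_eq_inter_compl, inter_comm]
    simp only [lovasz] at hval ⊢
    rw [hlevel, integral_add hint (integrableOn_Ioi_indicator_Iic _ _), hval,
      setIntegral_Ioi_indicator_Iic ht', ← hAx, hcompl,
      sum_sdiff (subset_compl_iff_disjoint_right.2 hAC)]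
termination_by Cᶜ.card
decreasing_by
  obtain ⟨a, ha⟩ := hA
  refine card_lt_card (compl_ssubset_compl.2 (Finset.ssubset_iff_subset_ne.2
    ⟨subset_union_right, ?_⟩))
  exact fun h => disjoint_left.1 hAC ha (h ▸ mem_union_left C ha)

end Peeling

theorem lovasz_waterLevel_duality (f : Finset E → ℝ) (x : E → ℝ)
    (hmono : ∀ A B : Finset E, A ⊆ B → f A ≤ f B)
    (hsub : ∀ A B : Finset E, f (A ∪ B) + f (A ∩ B) ≤ f A + f B)
    (h0 : f ∅ = 0) (hpos : ∀ e : E, 0 < f {e}) (hx : ∀ e, 0 ≤ x e) :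
    lovasz f (waterLevel f x) = ∑ e : E, x e := by
  have hmono' : Monotone f := fun A B => hmono A B
  have hloopless : ∀ B : Finset E, Disjoint B ∅ → B.Nonempty → 0 < f (B ∪ ∅) - f ∅ := by
    rintro B - ⟨b, hb⟩
    simpa [h0] using (hpos b).trans_le (hmono' (singleton_subset_iff.2 hb))
  obtain ⟨t, hsparse⟩ := exists_isSparseOver (x := x) hloopless
  have hdense : IsDense f x ∅ t := fun T => by simp
  obtain ⟨-, -, hval⟩ := lovasz_contract_waterLevel hmono' hsub hx ∅ t hsparse hdense
  simpa [h0] using hval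
end

section
/- Under the small-bids assumption, water levels are Lipschitz: let f be monotone submodular with f(∅)=0 on finite E, b ∈ ℝ>0^E costs with b_e ≤ ε·f_T({e}) for all e ∈ E and T ⊆ E with f_T({e}) > 0. Let x ∈ ℝ≥0^E and y = x + t·1_e for some t ≥ 0 and e ∈ E. Then w^{by}_e ≤ w^{bx}_e + εt, where w^{bz} denotes the water level vector of the vector (b_{e'} z_{e'})_{e'}. -/
/-!
Raising `x_e` by `t` changes the numerator of a ratio `v(S \ T) / f_T(S)` only when `e ∈ S \ T`,
and then by `b_e t`. Since `e ∈ S`, monotonicity gives `f_T(S) ≥ f_T({e}) ≥ b_e / ε`, so every ratio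
grows by at most `ε t`; hence so does each infimum over `T` and the supremum over `S`, which
range over finite sets of reals because `E` is finite.
-/

open Finset

variable {E : Type*} [Fintype E] [DecidableEq E]

section FiniteFamily

variable {ι : Type*} [Finite ι] {p : ι → Prop} {F G : ι → ℝ} {c : ℝ}

lemma finite_setOf_exists_and_eq_s12 (p : ι → Prop) (F : ι → ℝ) :
    {r | ∃ i, p i ∧ r = F i}.Finite :=
  (Set.finite_range F).subset fun _ ⟨i, _, hr⟩ => ⟨i, hr.symm⟩

lemma sInf_setOf_le_sInf_add (hc : 0 ≤ c) (h : ∀ i, p i → F i ≤ G i + c) :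
    sInf {r | ∃ i, p i ∧ r = F i} ≤ sInf {r | ∃ i, p i ∧ r = G i} + c := by
  by_cases hp : ∃ i, p i
  · obtain ⟨i₀, hi₀⟩ := hp
    rw [← sub_le_iff_le_add]
    refine le_csInf ⟨G i₀, i₀, hi₀, rfl⟩ ?_
    rintro _ ⟨i, hi, rfl⟩
    calc sInf {r | ∃ i, p i ∧ r = F i} - c ≤ F i - c :=
          sub_le_sub_right (csInf_le (finite_setOf_exists_and_eq_s12 p F).bddBelow ⟨i, hi, rfl⟩) c
      _ ≤ G i := by linarith [h i hi]
  · rw [not_exists] at hp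
    simpa [hp] using hc

lemma sSup_setOf_le_sSup_add (hc : 0 ≤ c) (h : ∀ i, p i → F i ≤ G i + c) :
    sSup {r | ∃ i, p i ∧ r = F i} ≤ sSup {r | ∃ i, p i ∧ r = G i} + c := by
  by_cases hp : ∃ i, p i
  · obtain ⟨i₀, hi₀⟩ := hp
    refine csSup_le ⟨F i₀, i₀, hi₀, rfl⟩ ?_
    rintro _ ⟨i, hi, rfl⟩
    exact (h i hi).trans <| add_le_add_left
      (le_csSup (finite_setOf_exists_and_eq_s12 p G).bddAbove ⟨i, hi, rfl⟩) c
  · rw [not_exists] at hp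
    simpa [hp] using hc

end FiniteFamily

section Marginal

variable {α : Type*} [DecidableEq α] {f : Finset α → ℝ} {e : α} {S T : Finset α}

lemma marginal_singleton_le_marginal (hf : Monotone f) (he : e ∈ S) :
    f ({e} ∪ T) - f T ≤ f (S ∪ T) - f T :=
  sub_le_sub_right (hf (union_subset_union (singleton_subset_iff.mpr he) le_rfl)) _

lemma marginal_pos_of_ne_zero (hf : Monotone f) (hT : f ({e} ∪ T) - f T ≠ 0) :
    0 < f ({e} ∪ T) - f T :=
  (sub_nonneg.mpr (hf subset_union_right)).lt_of_ne hT.symm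

variable {v : α → ℝ} {s δ : ℝ}

lemma ratio_add_single_le (hf : Monotone f) (hδ : 0 ≤ δ)
    (hs : ∀ T : Finset α, f ({e} ∪ T) - f T ≠ 0 → s ≤ δ * (f ({e} ∪ T) - f T))
    (he : e ∈ S) (hT : f ({e} ∪ T) - f T ≠ 0) :
    (∑ a ∈ S \ T, (v + Pi.single e s : α → ℝ) a) / (f (S ∪ T) - f T) ≤
      (∑ a ∈ S \ T, v a) / (f (S ∪ T) - f T) + δ := by
  have hmarg := marginal_singleton_le_marginal (T := T) hf he
  have hD : 0 < f (S ∪ T) - f T := (marginal_pos_of_ne_zero hf hT).trans_le hmarg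
  simp only [Pi.add_apply, sum_add_distrib, sum_pi_single', add_div]
  gcongr
  split_ifs
  · rw [div_le_iff₀ hD]
    exact (hs T hT).trans (mul_le_mul_of_nonneg_left hmarg hδ)
  · simpa using hδ

end Marginal

theorem waterLevel_add_single_le {f : Finset E → ℝ} {v : E → ℝ} {e : E} {s δ : ℝ}
    (hf : Monotone f) (hδ : 0 ≤ δ)
    (hs : ∀ T : Finset E, f ({e} ∪ T) - f T ≠ 0 → s ≤ δ * (f ({e} ∪ T) - f T)) :
    waterLevel f (v + Pi.single e s) e ≤ waterLevel f v e + δ :=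
  sSup_setOf_le_sSup_add hδ fun _ he =>
    sInf_setOf_le_sInf_add hδ fun _ hT => ratio_add_single_le hf hδ hs he hT

theorem waterLevel_lipschitz_small_bids_general (f : Finset E → ℝ) (b x : E → ℝ)
    (ε : ℝ) (hε : 0 < ε)
    (hmono : ∀ A B : Finset E, A ⊆ B → f A ≤ f B)
    -- small bids assumption
    (hsmall : ∀ (e : E) (T : Finset E), 0 < f ({e} ∪ T) - f T →
      b e ≤ ε * (f ({e} ∪ T) - f T))
    (e : E) (t : ℝ) (ht : 0 ≤ t)
    (y : E → ℝ) (hy : y = fun e' => x e' + if e' = e then t else 0) :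
    waterLevel f (fun e' => b e' * y e') e ≤
      waterLevel f (fun e' => b e' * x e') e + ε * t := by
  have hf : Monotone f := fun A B h => hmono A B h
  have hby : (fun e' => b e' * y e') = (fun e' => b e' * x e') + Pi.single e (b e * t) := by
    ext a
    by_cases ha : a = e <;> simp [hy, ha, mul_add]
  rw [hby]
  refine waterLevel_add_single_le hf (mul_nonneg hε.le ht) fun T hT => ?_
  calc b e * t ≤ ε * (f ({e} ∪ T) - f T) * t :=
        mul_le_mul_of_nonneg_right (hsmall e T (marginal_pos_of_ne_zero hf hT)) ht
    _ = ε * t * (f ({e} ∪ T) - f T) := by ring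

theorem waterLevel_lipschitz_small_bids (f : Finset E → ℝ) (b x : E → ℝ)
    (ε : ℝ) (hε : 0 < ε)
    (hmono : ∀ A B : Finset E, A ⊆ B → f A ≤ f B)
    (hsub : ∀ A B : Finset E, f (A ∪ B) + f (A ∩ B) ≤ f A + f B)
    (h0 : f ∅ = 0) (hpos : ∀ e : E, 0 < f {e})
    (hb : ∀ e, 0 < b e)
    -- small bids assumption
    (hsmall : ∀ (e : E) (T : Finset E), 0 < f ({e} ∪ T) - f T →
      b e ≤ ε * (f ({e} ∪ T) - f T))
    (hx : ∀ e, 0 ≤ x e)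
    (e : E) (t : ℝ) (ht : 0 ≤ t)
    (y : E → ℝ) (hy : y = fun e' => x e' + if e' = e then t else 0) :
    waterLevel f (fun e' => b e' * y e') e ≤
      waterLevel f (fun e' => b e' * x e') e + ε * t :=
  waterLevel_lipschitz_small_bids_general f b x ε hε hmono hsmall e t ht y hy
end

section
/- Let f be a monotone submodular function on finite E with f(∅)=0 arising from a laminar family: f(S) := min{ ∑_{T ∈ 𝒮} B_T : 𝒮 ⊆ ℒ covers S }, where ℒ is a laminar family of subsets of E whose union is E, and B_T ≥ 0 for each T ∈ ℒ. Then f is monotone and submodular. -/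
/-!
Take optimal covers `𝒳` of `A` and `𝒴` of `C`. The maximal members of `𝒳 ∪ 𝒴` cover `A ∪ C`.
A point of `A ∩ C` lies in some `S ∈ 𝒳` and `T ∈ 𝒴`; by laminarity these are nested, so either
`S = T ∈ 𝒳 ∩ 𝒴` or the smaller one is not maximal in `𝒳 ∪ 𝒴`. Hence the non-maximal members
together with `𝒳 ∩ 𝒴` cover `A ∩ C`, and the two new covers cost at most
`∑ 𝒳 B + ∑ 𝒴 B = f A + f C`. Monotonicity holds because a cover of `C` covers every `A ⊆ C`.
-/

open Finset

variable {E : Type*} [Fintype E] [DecidableEq E]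

/-- The minimum budget of a sub-family of the laminar family `ℒ` covering `S`. -/
noncomputable def laminarF (ℒ : Finset (Finset E)) (B : Finset E → ℝ) (S : Finset E) : ℝ :=
  sInf {r | ∃ 𝒮 : Finset (Finset E), 𝒮 ⊆ ℒ ∧ S ⊆ 𝒮.biUnion id ∧ r = ∑ T ∈ 𝒮, B T}

section Laminar

variable {α M : Type*} [DecidableEq α]
  [AddCommMonoid M] [PartialOrder M] [IsOrderedAddMonoid M]

lemma sum_union_le_sum_add_sum {f : α → M} (hf : ∀ a, 0 ≤ f a) (s t : Finset α) :
    ∑ a ∈ s ∪ t, f a ≤ ∑ a ∈ s, f a + ∑ a ∈ t, f a := by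
  rw [← sum_union_inter]
  exact le_add_of_nonneg_right (sum_nonneg fun a _ => hf a)

lemma biUnion_subset_biUnion_filter_maximal (𝒳 : Finset (Finset α))
    [DecidablePred (Maximal (· ∈ 𝒳))] :
    𝒳.biUnion id ⊆ (𝒳.filter (Maximal (· ∈ 𝒳))).biUnion id := by
  intro e he
  obtain ⟨T, hT, heT⟩ := mem_biUnion.1 he
  obtain ⟨M, hTM, hM⟩ := 𝒳.exists_le_maximal hT
  exact mem_biUnion.2 ⟨M, mem_filter.2 ⟨hM.prop, hM⟩, hTM heT⟩

lemma exists_uncrossing {𝒳 𝒴 : Finset (Finset α)}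
    (hlam : ∀ S ∈ 𝒳, ∀ T ∈ 𝒴, S ⊆ T ∨ T ⊆ S ∨ Disjoint S T)
    {f : Finset α → M} (hf : ∀ T, 0 ≤ f T) :
    ∃ 𝒰 𝒱 : Finset (Finset α), 𝒰 ∪ 𝒱 ⊆ 𝒳 ∪ 𝒴 ∧
      𝒳.biUnion id ∪ 𝒴.biUnion id ⊆ 𝒰.biUnion id ∧
      𝒳.biUnion id ∩ 𝒴.biUnion id ⊆ 𝒱.biUnion id ∧
      ∑ T ∈ 𝒰, f T + ∑ T ∈ 𝒱, f T ≤ ∑ T ∈ 𝒳, f T + ∑ T ∈ 𝒴, f T := by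
  classical
  set outer : Finset α → Prop := Maximal (· ∈ 𝒳 ∪ 𝒴)
  set 𝒱 := (𝒳 ∪ 𝒴).filter (¬ outer ·) ∪ (𝒳 ∩ 𝒴)
  refine ⟨(𝒳 ∪ 𝒴).filter outer, 𝒱, ?_, ?_, ?_, ?_⟩
  · exact union_subset (filter_subset _ _) (union_subset (filter_subset _ _) inter_subset_union)
  · rw [← union_biUnion]
    exact biUnion_subset_biUnion_filter_maximal _
  · intro e he
    obtain ⟨S, hS, heS⟩ := mem_biUnion.1 (mem_inter.1 he).1
    obtain ⟨T, hT, heT⟩ := mem_biUnion.1 (mem_inter.1 he).2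
    have hcommon : S = T → e ∈ 𝒱.biUnion id := fun hST =>
      mem_biUnion.2 ⟨S, mem_union_right _ (mem_inter.2 ⟨hS, hST ▸ hT⟩), heS⟩
    have hlower : ∀ {R R'}, R ∈ 𝒳 ∪ 𝒴 → R' ∈ 𝒳 ∪ 𝒴 → R ⊂ R' → e ∈ R → e ∈ 𝒱.biUnion id :=
      fun hR hR' hRR' heR => mem_biUnion.2
        ⟨_, mem_union_left _ (mem_filter.2 ⟨hR, fun hmax => hmax.not_gt hR' hRR'⟩), heR⟩
    have hS' : S ∈ 𝒳 ∪ 𝒴 := mem_union_left _ hS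
    have hT' : T ∈ 𝒳 ∪ 𝒴 := mem_union_right _ hT
    rcases hlam S hS T hT with hST | hTS | hdisj
    · rcases hST.eq_or_ssubset with hST | hST
      exacts [hcommon hST, hlower hS' hT' hST heS]
    · rcases hTS.eq_or_ssubset with hTS | hTS
      exacts [hcommon hTS.symm, hlower hT' hS' hTS heT]
    · exact (hdisj.forall_ne_finset heS heT rfl).elim
  · calc ∑ T ∈ (𝒳 ∪ 𝒴).filter outer, f T + ∑ T ∈ 𝒱, f T
        ≤ ∑ T ∈ (𝒳 ∪ 𝒴).filter outer, f T +
            (∑ T ∈ (𝒳 ∪ 𝒴).filter (¬ outer ·), f T + ∑ T ∈ 𝒳 ∩ 𝒴, f T) :=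
          add_le_add le_rfl (sum_union_le_sum_add_sum hf _ _)
      _ = ∑ T ∈ 𝒳 ∪ 𝒴, f T + ∑ T ∈ 𝒳 ∩ 𝒴, f T := by
          rw [← add_assoc, sum_filter_add_sum_filter_not]
      _ = ∑ T ∈ 𝒳, f T + ∑ T ∈ 𝒴, f T := sum_union_inter

lemma finite_coverCosts (ℒ : Finset (Finset α)) (B : Finset α → ℝ) (S : Finset α) :
    {r | ∃ 𝒮 : Finset (Finset α), 𝒮 ⊆ ℒ ∧ S ⊆ 𝒮.biUnion id ∧ r = ∑ T ∈ 𝒮, B T}.Finite :=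
  (ℒ.powerset.finite_toSet.image fun 𝒮 => ∑ T ∈ 𝒮, B T).subset <| by
    rintro _ ⟨𝒮, h𝒮, -, rfl⟩
    exact ⟨𝒮, by simpa using h𝒮, rfl⟩

variable {ℒ : Finset (Finset α)} {B : Finset α → ℝ} {S : Finset α}

lemma laminarF_le_sum {𝒮 : Finset (Finset α)} (h𝒮 : 𝒮 ⊆ ℒ) (hS : S ⊆ 𝒮.biUnion id) :
    laminarF ℒ B S ≤ ∑ T ∈ 𝒮, B T :=
  csInf_le (finite_coverCosts ℒ B S).bddBelow ⟨𝒮, h𝒮, hS, rfl⟩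

lemma exists_cover_laminarF_eq (hS : S ⊆ ℒ.biUnion id) :
    ∃ 𝒮 ⊆ ℒ, S ⊆ 𝒮.biUnion id ∧ laminarF ℒ B S = ∑ T ∈ 𝒮, B T := by
  refine Set.Nonempty.csInf_mem ?_ (finite_coverCosts ℒ B S)
  exact ⟨_, ℒ, subset_rfl, hS, rfl⟩

end Laminar

theorem laminarF_monotone_submodular (ℒ : Finset (Finset E)) (B : Finset E → ℝ)
    -- ℒ is laminar
    (hlam : ∀ A ∈ ℒ, ∀ C ∈ ℒ, A ⊆ C ∨ C ⊆ A ∨ Disjoint A C)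
    -- ℒ covers the ground set
    (hcover : ∀ e : E, ∃ T ∈ ℒ, e ∈ T)
    -- budgets are nonnegative
    (hB : ∀ T, 0 ≤ B T) :
    (∀ A C : Finset E, A ⊆ C → laminarF ℒ B A ≤ laminarF ℒ B C) ∧
    (∀ A C : Finset E,
      laminarF ℒ B (A ∪ C) + laminarF ℒ B (A ∩ C) ≤ laminarF ℒ B A + laminarF ℒ B C) := by
  have hcov (S : Finset E) : S ⊆ ℒ.biUnion id := fun e _ => by
    obtain ⟨T, hT, heT⟩ := hcover e
    exact mem_biUnion.2 ⟨T, hT, heT⟩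
  refine ⟨fun A C hAC => ?_, fun A C => ?_⟩
  · obtain ⟨𝒴, h𝒴, hC𝒴, hfC⟩ := exists_cover_laminarF_eq (B := B) (hcov C)
    exact hfC ▸ laminarF_le_sum h𝒴 (hAC.trans hC𝒴)
  · obtain ⟨𝒳, h𝒳, hA𝒳, hfA⟩ := exists_cover_laminarF_eq (B := B) (hcov A)
    obtain ⟨𝒴, h𝒴, hC𝒴, hfC⟩ := exists_cover_laminarF_eq (B := B) (hcov C)
    obtain ⟨𝒰, 𝒱, h𝒰𝒱, hunion, hinter, hsum⟩ :=
      exists_uncrossing (fun S hS T hT => hlam S (h𝒳 hS) T (h𝒴 hT)) hB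
    have h𝒰𝒱ℒ : 𝒰 ∪ 𝒱 ⊆ ℒ := h𝒰𝒱.trans (union_subset h𝒳 h𝒴)
    calc laminarF ℒ B (A ∪ C) + laminarF ℒ B (A ∩ C)
        ≤ ∑ T ∈ 𝒰, B T + ∑ T ∈ 𝒱, B T :=
          add_le_add (laminarF_le_sum (union_subset_left h𝒰𝒱ℒ)
              ((union_subset_union hA𝒳 hC𝒴).trans hunion))
            (laminarF_le_sum (union_subset_right h𝒰𝒱ℒ)
              ((inter_subset_inter hA𝒳 hC𝒴).trans hinter))
      _ ≤ laminarF ℒ B A + laminarF ℒ B C := hfA ▸ hfC ▸ hsum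
end

section
/- Weak duality for the submodular assignment LP: let f be monotone submodular with f(∅)=0 on finite E, partitioned as E = Q₁ ∪ ... ∪ Q_n, with values v ∈ ℝ≥0^E and costs b ∈ ℝ>0^E. Suppose x ∈ ℝ≥0^E satisfies x(Q_j) ≤ 1 for all j and ∑_{e∈S} b_e x_e ≤ f(S) for all S ⊆ E, and suppose (γ, β) ∈ ℝ≥0^E × ℝ≥0^n satisfies b_e γ_e + β_{j(e)} ≥ v_e for all e ∈ E (where j(e) is the index with e ∈ Q_{j(e)}). Then ∑_e v_e x_e ≤ L_f(γ) + ∑_j β_j, where L_f(γ) = ∫_0^∞ f({e : γ_e ≥ t}) dt. -/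
open Finset MeasureTheory

variable {E : Type*} [Fintype E] [DecidableEq E]

/-!
Both sides of `v ≤ b γ + β ∘ jdx` are integrated against the primal point `x`. The `β` part is
at most `∑ β` because `x` puts mass at most one on each part. For the `γ` part, the layer-cake
formula writes `∑ (b x) γ` as the integral over `t > 0` of `b x` summed over the superlevel set
`{γ ≥ t}`, and primal feasibility bounds that integrand pointwise by the integrand `f {γ ≥ t}` of
the Lovász extension.
-/

section LayerCake

variable {ι : Type*} [Fintype ι]

theorem measurable_superlevelFinset (w : ι → ℝ) :
    Measurable fun t : ℝ => univ.filter fun i => t ≤ w i := by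
  rw [measurable_finset_iff]
  intro i
  simpa using measurableSet_setOfPred.1 (measurableSet_Iic (a := w i))

theorem integrableOn_Ioi_comp_superlevelFinset (f : Finset ι → ℝ) (hf0 : f ∅ = 0)
    (w : ι → ℝ) (a : ℝ) :
    IntegrableOn (fun t => f (univ.filter fun i => t ≤ w i)) (Set.Ioi a) := by
  set M := ∑ i, |w i|
  have hzero : Set.EqOn (fun t => f (univ.filter fun i => t ≤ w i)) 0 (Set.Ioi M) := by
    intro t (ht : M < t)
    have hlt : ∀ i, w i < t := fun i =>
      ((le_abs_self _).trans
        (single_le_sum (fun j _ => abs_nonneg (w j)) (mem_univ i))).trans_lt ht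
    simp [filter_false_of_mem fun i _ => not_le.2 (hlt i), hf0]
  obtain ⟨C, hC⟩ := (Set.finite_range fun S => ‖f S‖).bddAbove
  have hbounded : IntegrableOn (fun t => f (univ.filter fun i => t ≤ w i)) (Set.Ioc a M) :=
    Measure.integrableOn_of_bounded measure_Ioc_lt_top.ne
      ((measurable_of_countable f).comp (measurable_superlevelFinset w)).aestronglyMeasurable
      (ae_of_all _ fun t => hC ⟨_, rfl⟩)
  have htail : IntegrableOn (fun t => f (univ.filter fun i => t ≤ w i)) (Set.Ioi M) :=
    (integrableOn_congr_fun hzero measurableSet_Ioi).2 integrableOn_zero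
  exact (hbounded.union htail).mono_set Set.Ioi_subset_Ioc_union_Ioi

theorem integral_Ioi_indicator_Iic (c : ℝ) {a : ℝ} (ha : 0 ≤ a) :
    ∫ t in Set.Ioi (0 : ℝ), (Set.Iic a).indicator (fun _ => c) t = c * a := by
  rw [setIntegral_indicator measurableSet_Iic, Set.Ioi_inter_Iic, setIntegral_const,
    Real.volume_real_Ioc_of_le ha, smul_eq_mul, sub_zero, mul_comm]

theorem sum_mul_eq_integral_sum_superlevelFinset (c w : ι → ℝ) (hw : ∀ i, 0 ≤ w i) :
    ∑ i, c i * w i = ∫ t in Set.Ioi (0 : ℝ), ∑ i ∈ univ.filter (fun i => t ≤ w i), c i := by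
  have hterm : ∀ i, IntegrableOn ((Set.Iic (w i)).indicator fun _ => c i) (Set.Ioi 0) := by
    intro i
    rw [IntegrableOn, integrable_indicator_iff measurableSet_Iic, IntegrableOn,
      Measure.restrict_restrict measurableSet_Iic, Set.inter_comm, Set.Ioi_inter_Iic]
    exact integrableOn_const measure_Ioc_lt_top.ne
  have hindicator : ∀ t, ∑ i ∈ univ.filter (fun i => t ≤ w i), c i
      = ∑ i, (Set.Iic (w i)).indicator (fun _ => c i) t := by
    intro t
    rw [sum_filter]
    rfl
  simp_rw [hindicator]
  rw [integral_finsetSum _ fun i _ => hterm i]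
  exact sum_congr rfl fun i _ => (integral_Ioi_indicator_Iic (c i) (hw i)).symm

theorem sum_mul_le_lovasz (f : Finset ι → ℝ) (hf0 : f ∅ = 0) (c w : ι → ℝ)
    (hc : ∀ S, ∑ i ∈ S, c i ≤ f S) (hw : ∀ i, 0 ≤ w i) :
    ∑ i, c i * w i ≤ lovasz f w := by
  rw [sum_mul_eq_integral_sum_superlevelFinset c w hw, lovasz]
  exact setIntegral_mono_on
    (integrableOn_Ioi_comp_superlevelFinset (fun S => ∑ i ∈ S, c i) sum_empty w 0)
    (integrableOn_Ioi_comp_superlevelFinset f hf0 w 0) measurableSet_Ioi fun t _ => hc _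

end LayerCake

theorem sum_mul_comp_le_sum {ι κ : Type*} [Fintype ι] [Fintype κ] [DecidableEq κ]
    (p : ι → κ) (β : κ → ℝ) (x : ι → ℝ) (hβ : ∀ j, 0 ≤ β j)
    (hx : ∀ j, ∑ i ∈ univ.filter (fun i => p i = j), x i ≤ 1) :
    ∑ i, β (p i) * x i ≤ ∑ j, β j := by
  rw [← sum_fiberwise univ p]
  refine sum_le_sum fun j _ => ?_
  calc ∑ i ∈ univ.filter (fun i => p i = j), β (p i) * x i
      = β j * ∑ i ∈ univ.filter (fun i => p i = j), x i := by
        rw [mul_sum]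
        exact sum_congr rfl fun i hi => by rw [(mem_filter.1 hi).2]
    _ ≤ β j := mul_le_of_le_one_right (hβ j) (hx j)

theorem SAP_weak_duality_general (f : Finset E → ℝ) (n : ℕ)
    (jdx : E → Fin n) -- e belongs to part Q_{jdx e}; the parts partition E
    (v b x γ : E → ℝ) (β : Fin n → ℝ)
    (h0 : f ∅ = 0)
    -- primal feasibility
    (hx : ∀ e, 0 ≤ x e)
    (hxQ : ∀ j : Fin n, ∑ e ∈ Finset.univ.filter (fun e => jdx e = j), x e ≤ 1)
    (hxf : ∀ S : Finset E, ∑ e ∈ S, b e * x e ≤ f S)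
    -- dual feasibility
    (hγ : ∀ e, 0 ≤ γ e) (hβ : ∀ j, 0 ≤ β j)
    (hdual : ∀ e : E, v e ≤ b e * γ e + β (jdx e)) :
    ∑ e : E, v e * x e ≤ lovasz f γ + ∑ j : Fin n, β j :=
  calc ∑ e, v e * x e
      ≤ ∑ e, (b e * γ e + β (jdx e)) * x e :=
        sum_le_sum fun e _ => mul_le_mul_of_nonneg_right (hdual e) (hx e)
    _ = ∑ e, b e * x e * γ e + ∑ e, β (jdx e) * x e := by
        rw [← sum_add_distrib]
        exact sum_congr rfl fun e _ => by ring
    _ ≤ lovasz f γ + ∑ j, β j :=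
        add_le_add (sum_mul_le_lovasz f h0 _ γ hxf hγ) (sum_mul_comp_le_sum jdx β x hβ hxQ)

theorem SAP_weak_duality (f : Finset E → ℝ) (n : ℕ)
    (jdx : E → Fin n) -- e belongs to part Q_{jdx e}; the parts partition E
    (v b x γ : E → ℝ) (β : Fin n → ℝ)
    (hmono : ∀ A B : Finset E, A ⊆ B → f A ≤ f B)
    (hsub : ∀ A B : Finset E, f (A ∪ B) + f (A ∩ B) ≤ f A + f B)
    (h0 : f ∅ = 0)
    (hv : ∀ e, 0 ≤ v e) (hb : ∀ e, 0 < b e)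
    -- primal feasibility
    (hx : ∀ e, 0 ≤ x e)
    (hxQ : ∀ j : Fin n, ∑ e ∈ Finset.univ.filter (fun e => jdx e = j), x e ≤ 1)
    (hxf : ∀ S : Finset E, ∑ e ∈ S, b e * x e ≤ f S)
    -- dual feasibility
    (hγ : ∀ e, 0 ≤ γ e) (hβ : ∀ j, 0 ≤ β j)
    (hdual : ∀ e : E, v e ≤ b e * γ e + β (jdx e)) :
    ∑ e : E, v e * x e ≤ lovasz f γ + ∑ j : Fin n, β j :=
  SAP_weak_duality_general f n jdx v b x γ β h0 hx hxQ hxf hγ hβ hdual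
end
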